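/- Consider pairs (η,γ) ∈ [0,√2]×[0,1) satisfying both A·γ − B·η = 0 and C·γ + A·η = γ/(1−γ²). The pair (0,0) is always such a solution. If either (ξ′ < ξ″ and h² ≤ ξ′(ξ″−ξ′)/ξ″) or h² > ξ″ − ξ′, then (0,0) is the only solution in [0,√2]×[0,1). If ξ′ < ξ″ and ξ′(ξ″−ξ′)/ξ″ < h² ≤ ξ″ − ξ′, then the solutions in [0,√2]×[0,1) are exactly (0,0) and (η₀,γ₀). -/

import Mathlib

/-- A = 2h̃/(1+a) with h̃ = h/√(2ξ″), a = ξ′/ξ″. -/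
noncomputable def A (ξ' ξ'' h : ℝ) : ℝ := 2 * (h / Real.sqrt (2 * ξ'')) / (1 + ξ' / ξ'')

/-- B = (1−a)/(1+a) with a = ξ′/ξ″. -/
noncomputable def B (ξ' ξ'' : ℝ) : ℝ := (1 - ξ' / ξ'') / (1 + ξ' / ξ'')

/-- C = 2h̃²/((1+a)·a) with h̃ = h/√(2ξ″), a = ξ′/ξ″. -/
noncomputable def C (ξ' ξ'' h : ℝ) : ℝ :=
  2 * (h / Real.sqrt (2 * ξ'')) ^ 2 / ((1 + ξ' / ξ'') * (ξ' / ξ''))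

/-- γ₀ = (1/h)·√((ξ″h² − ξ′(ξ″−ξ′))/ξ″). -/
noncomputable def γ0 (ξ' ξ'' h : ℝ) : ℝ :=
  (1 / h) * Real.sqrt ((ξ'' * h ^ 2 - ξ' * (ξ'' - ξ')) / ξ'')

/-- η₀ = h·γ₀·√(2ξ″)/(ξ″−ξ′). -/
noncomputable def η0 (ξ' ξ'' h : ℝ) : ℝ :=
  h * γ0 ξ' ξ'' h * Real.sqrt (2 * ξ'') / (ξ'' - ξ')

/-- (η,γ) ∈ [0,√2]×[0,1) and A·γ − B·η = 0, C·γ + A·η = γ/(1−γ²). -/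
def Sol (ξ' ξ'' h η γ : ℝ) : Prop :=
  0 ≤ η ∧ η ≤ Real.sqrt 2 ∧ 0 ≤ γ ∧ γ < 1 ∧
  A ξ' ξ'' h * γ - B ξ' ξ'' * η = 0 ∧
  C ξ' ξ'' h * γ + A ξ' ξ'' h * η = γ / (1 - γ ^ 2)

lemma aux_eq1 (ξ' ξ'' h s η γ : ℝ) (hξ' : 0 < ξ') (hξ'' : 0 < ξ'') (hs : 0 < s)
    (hs2 : s ^ 2 = 2 * ξ'') :
    2 * (h / s) / (1 + ξ' / ξ'') * γ - (1 - ξ' / ξ'') / (1 + ξ' / ξ'') * η = 0 ↔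
      h * s * γ = (ξ'' - ξ') * η := by
  rw [sub_eq_zero]
  have hc : (2*ξ''*(ξ''+ξ')) ≠ 0 := by positivity
  constructor
  · intro H
    field_simp at H
    apply mul_left_cancel₀ hc
    linear_combination s*(ξ''+ξ')*H + (ξ''-ξ')*(ξ''+ξ')*η*hs2
  · intro H
    field_simp
    linear_combination s*H - h*γ*hs2

lemma aux_eq2 (ξ' ξ'' h s η γ : ℝ) (hξ' : 0 < ξ') (hξ'' : 0 < ξ'') (hs : 0 < s)
    (hs2 : s ^ 2 = 2 * ξ'') (hγ : 0 ≤ γ) (hγ1 : γ < 1) :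
    2*(h/s)^2/((1+ξ'/ξ'')*(ξ'/ξ''))*γ + 2*(h/s)/(1+ξ'/ξ'')*η = γ/(1-γ^2) ↔
      (h^2*ξ''*γ + h*s*η*ξ')*(1-γ^2) = (ξ''+ξ')*ξ'*γ := by
  have hg2 : 1 - γ^2 ≠ 0 := by nlinarith
  have hc : (2*ξ''*(ξ''+ξ')*s) ≠ 0 := by positivity
  constructor
  · intro H
    field_simp at H
    apply mul_left_cancel₀ hc
    linear_combination (ξ''+ξ')*s*H + γ*ξ'*(ξ''+ξ')^2*s*hs2
  · intro H
    field_simp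
    linear_combination 2*ξ''*H - ξ'*(ξ''+ξ')*γ*hs2

lemma sol_iff (ξ' ξ'' h : ℝ) (hξ' : 0 < ξ') (hξ'' : 0 < ξ'') (η γ : ℝ) :
    Sol ξ' ξ'' h η γ ↔
      0 ≤ η ∧ η ≤ Real.sqrt 2 ∧ 0 ≤ γ ∧ γ < 1 ∧
      h * Real.sqrt (2 * ξ'') * γ = (ξ'' - ξ') * η ∧
      (h^2*ξ''*γ + h*Real.sqrt (2 * ξ'')*η*ξ')*(1-γ^2) = (ξ''+ξ')*ξ'*γ := by
  have hs : (0:ℝ) < Real.sqrt (2 * ξ'') := Real.sqrt_pos.mpr (by linarith)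
  have hs2 : Real.sqrt (2 * ξ'') ^ 2 = 2 * ξ'' := Real.sq_sqrt (by linarith)
  unfold Sol A B C
  constructor
  · rintro ⟨h1, h2, h3, h4, h5, h6⟩
    exact ⟨h1, h2, h3, h4,
      (aux_eq1 ξ' ξ'' h _ η γ hξ' hξ'' hs hs2).mp h5,
      (aux_eq2 ξ' ξ'' h _ η γ hξ' hξ'' hs hs2 h3 h4).mp h6⟩
  · rintro ⟨h1, h2, h3, h4, h5, h6⟩
    exact ⟨h1, h2, h3, h4,
      (aux_eq1 ξ' ξ'' h _ η γ hξ' hξ'' hs hs2).mpr h5,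
      (aux_eq2 ξ' ξ'' h _ η γ hξ' hξ'' hs hs2 h3 h4).mpr h6⟩

/-- key derivation for nonzero solutions -/
lemma key (ξ' ξ'' h : ℝ) (hξ' : 0 < ξ') (hξ'' : 0 < ξ'') (hh : 0 ≤ h)
    (η γ : ℝ) (hsol : Sol ξ' ξ'' h η γ) (hγne : γ ≠ 0) :
    0 < h ∧ ξ' < ξ'' ∧ ξ' * (ξ'' - ξ') / ξ'' < h ^ 2 ∧ h ^ 2 ≤ ξ'' - ξ' ∧
      γ = γ0 ξ' ξ'' h ∧ η = η0 ξ' ξ'' h := by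
  have hs : (0:ℝ) < Real.sqrt (2 * ξ'') := Real.sqrt_pos.mpr (by linarith)
  have hs2 : Real.sqrt (2 * ξ'') ^ 2 = 2 * ξ'' := Real.sq_sqrt (by linarith)
  set s := Real.sqrt (2 * ξ'') with hsdef
  obtain ⟨hη1, hη2, hγ1, hγ2, e1, e2⟩ := (sol_iff ξ' ξ'' h hξ' hξ'' η γ).mp hsol
  have hγpos : 0 < γ := lt_of_le_of_ne hγ1 (Ne.symm hγne)
  have hg2 : 0 < 1 - γ ^ 2 := by nlinarith
  -- h > 0
  have hhpos : 0 < h := by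
    rcases hh.lt_or_eq with h' | h'
    · exact h'
    · exfalso; rw [← h'] at e2
      nlinarith [e2, mul_pos (mul_pos hξ' hγpos) (show (0:ℝ) < ξ'' + ξ' by linarith)]
  -- ξ' < ξ''
  have hlt : ξ' < ξ'' := by nlinarith [mul_pos (mul_pos hhpos hs) hγpos]
  -- key quadratic relation
  have hkey : h ^ 2 * ξ'' * (1 - γ ^ 2) = ξ' * (ξ'' - ξ') := by
    have hc : γ * (ξ'' + ξ') ≠ 0 := by positivity
    apply mul_left_cancel₀ hc
    linear_combination (ξ''-ξ')*e2 + h*s*ξ'*(1-γ^2)*e1 - h^2*γ*(1-γ^2)*ξ'*hs2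
  have hγsq : γ ^ 2 * (h ^ 2 * ξ'') = ξ'' * h ^ 2 - ξ' * (ξ'' - ξ') := by
    linear_combination -hkey
  -- strict lower bound on h²
  have hlow : ξ' * (ξ'' - ξ') / ξ'' < h ^ 2 := by
    rw [div_lt_iff₀ hξ'']
    nlinarith [mul_pos (mul_pos (pow_pos hγpos 2) (pow_pos hhpos 2)) hξ'']
  -- upper bound on h²
  have hsq2 : Real.sqrt 2 ^ 2 = 2 := Real.sq_sqrt (by norm_num)
  have hup : h ^ 2 ≤ ξ'' - ξ' := by
    have h1 : h * s * γ ≤ Real.sqrt 2 * (ξ'' - ξ') := by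
      rw [e1]; nlinarith
    have h2 : (h * s * γ) ^ 2 ≤ (Real.sqrt 2 * (ξ'' - ξ')) ^ 2 := by
      have := mul_self_le_mul_self (by positivity) h1
      nlinarith [this]
    have e3 : (h * s * γ) ^ 2 = h ^ 2 * (2 * ξ'') * γ ^ 2 := by
      linear_combination h ^ 2 * γ ^ 2 * hs2
    have e4 : (Real.sqrt 2 * (ξ'' - ξ')) ^ 2 = 2 * (ξ'' - ξ') ^ 2 := by
      rw [mul_pow, hsq2]
    have h3 : h ^ 2 * (2 * ξ'') * γ ^ 2 ≤ 2 * (ξ'' - ξ') ^ 2 := by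
      rw [← e3, ← e4]; exact h2
    nlinarith [h3, hγsq, hξ'']
  -- γ = γ0
  have hXnn : 0 ≤ (ξ'' * h ^ 2 - ξ' * (ξ'' - ξ')) / ξ'' := by
    apply div_nonneg _ hξ''.le
    nlinarith [hγsq, mul_nonneg (mul_nonneg (sq_nonneg γ) (sq_nonneg h)) hξ''.le]
  have hγ0sq : (γ0 ξ' ξ'' h) ^ 2 * (h ^ 2 * ξ'') = ξ'' * h ^ 2 - ξ' * (ξ'' - ξ') := by
    rw [γ0, mul_pow, Real.sq_sqrt hXnn]
    field_simp
  have hγ0nn : 0 ≤ γ0 ξ' ξ'' h := by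
    rw [γ0]; positivity
  have hγeq : γ = γ0 ξ' ξ'' h := by
    have hsq : γ ^ 2 = (γ0 ξ' ξ'' h) ^ 2 := by
      have hc : (h ^ 2 * ξ'') ≠ 0 := by positivity
      apply mul_right_cancel₀ hc
      rw [hγsq, hγ0sq]
    rw [← Real.sqrt_sq hγ1, hsq, Real.sqrt_sq hγ0nn]
  -- η = η0
  have hηeq : η = η0 ξ' ξ'' h := by
    rw [η0, eq_div_iff (by linarith : ξ'' - ξ' ≠ 0)]
    rw [← hγeq, ← hsdef]
    linear_combination -e1
  exact ⟨hhpos, hlt, hlow, hup, hγeq, hηeq⟩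

/-- (0,0) is always a solution; if (ξ′ < ξ″ and h² ≤ ξ′(ξ″−ξ′)/ξ″) or h² > ξ″ − ξ′,
it is the only solution in [0,√2]×[0,1); if ξ′ < ξ″ and ξ′(ξ″−ξ′)/ξ″ < h² ≤ ξ″ − ξ′,
the solutions are exactly (0,0) and (η₀,γ₀). -/
theorem stmt_8 (ξ' ξ'' h : ℝ) (hξ' : 0 < ξ') (hξ'' : 0 < ξ'') (hh : 0 ≤ h) :
    Sol ξ' ξ'' h 0 0 ∧
    (((ξ' < ξ'' ∧ h ^ 2 ≤ ξ' * (ξ'' - ξ') / ξ'') ∨ ξ'' - ξ' < h ^ 2) →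
      ∀ η γ : ℝ, Sol ξ' ξ'' h η γ → η = 0 ∧ γ = 0) ∧
    ((ξ' < ξ'' ∧ ξ' * (ξ'' - ξ') / ξ'' < h ^ 2 ∧ h ^ 2 ≤ ξ'' - ξ') →
      Sol ξ' ξ'' h (η0 ξ' ξ'' h) (γ0 ξ' ξ'' h) ∧
      ∀ η γ : ℝ, Sol ξ' ξ'' h η γ →
        (η = 0 ∧ γ = 0) ∨ (η = η0 ξ' ξ'' h ∧ γ = γ0 ξ' ξ'' h)) := by
  have hs : (0:ℝ) < Real.sqrt (2 * ξ'') := Real.sqrt_pos.mpr (by linarith)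
  have hs2 : Real.sqrt (2 * ξ'') ^ 2 = 2 * ξ'' := Real.sq_sqrt (by linarith)
  set s := Real.sqrt (2 * ξ'') with hsdef
  refine ⟨?_, ?_, ?_⟩
  · -- (0,0) is a solution
    rw [sol_iff ξ' ξ'' h hξ' hξ'']
    refine ⟨le_refl 0, Real.sqrt_nonneg 2, le_refl 0, one_pos, by ring, by ring⟩
  · -- uniqueness under the first hypothesis
    intro hcase η γ hsol
    by_cases hγ : γ = 0
    · subst hγ
      obtain ⟨hη1, hη2, hγ1, hγ2, e1, e2⟩ := (sol_iff ξ' ξ'' h hξ' hξ'' η 0).mp hsol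
      refine ⟨?_, rfl⟩
      rcases eq_or_ne ξ'' ξ' with he | he
      · -- ξ'' = ξ' : use second case to get h > 0, then e2 gives η = 0
        have hh2 : 0 < h ^ 2 := by
          rcases hcase with ⟨hlt, _⟩ | hgt
          · exfalso; rw [he] at hlt; exact lt_irrefl _ hlt
          · rw [he] at hgt; simpa using hgt
        have hhpos : 0 < h := by
          rcases hh.lt_or_eq with h' | h'
          · exact h'
          · exfalso; rw [← h'] at hh2; simp at hh2
        have h4 : (h * s * ξ') * η = 0 := by linear_combination e2
        rcases mul_eq_zero.mp h4 with h' | h'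
        · exact absurd h' (mul_pos (mul_pos hhpos hs) hξ').ne'
        · exact h'
      · -- ξ'' ≠ ξ' : e1 gives η = 0
        have : (ξ'' - ξ') * η = 0 := by linarith [e1]
        rcases mul_eq_zero.mp this with h' | h'
        · exact absurd (by linarith : ξ'' = ξ') he
        · exact h'
    · exfalso
      obtain ⟨hhpos, hlt, hlow, hup, _, _⟩ := key ξ' ξ'' h hξ' hξ'' hh η γ hsol hγ
      rcases hcase with ⟨_, hle⟩ | hgt
      · linarith
      · linarith
  · -- third case
    rintro ⟨hlt, hlow, hup⟩
    have hhpos : 0 < h := by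
      rcases hh.lt_or_eq with h' | h'
      · exact h'
      · exfalso
        rw [← h'] at hlow
        have : 0 < ξ' * (ξ'' - ξ') / ξ'' :=
          div_pos (mul_pos hξ' (by linarith)) hξ''
        simp at hlow; linarith
    have hXpos : 0 < (ξ'' * h ^ 2 - ξ' * (ξ'' - ξ')) / ξ'' := by
      apply div_pos _ hξ''
      have := (div_lt_iff₀ hξ'').mp hlow
      nlinarith
    have hγ0pos : 0 < γ0 ξ' ξ'' h := by
      rw [γ0]
      exact mul_pos (one_div_pos.mpr hhpos) (Real.sqrt_pos.mpr hXpos)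
    have hγ0sq : (γ0 ξ' ξ'' h) ^ 2 * (h ^ 2 * ξ'') = ξ'' * h ^ 2 - ξ' * (ξ'' - ξ') := by
      rw [γ0, mul_pow, Real.sq_sqrt hXpos.le]
      field_simp
    have hsub : (0:ℝ) < ξ'' - ξ' := by linarith
    have hγ0lt : γ0 ξ' ξ'' h < 1 := by
      nlinarith [hγ0sq, hγ0pos, mul_pos hξ' hsub,
        mul_pos (pow_pos hhpos 2) hξ'', sq_nonneg (γ0 ξ' ξ'' h - 1)]
    have hη0nn : 0 ≤ η0 ξ' ξ'' h := by
      rw [η0]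
      exact div_nonneg (mul_nonneg (mul_nonneg hh hγ0pos.le) (Real.sqrt_nonneg _)) hsub.le
    have he1 : h * s * γ0 ξ' ξ'' h = (ξ'' - ξ') * η0 ξ' ξ'' h := by
      rw [η0, ← hsdef]
      field_simp
    have hη0le : η0 ξ' ξ'' h ≤ Real.sqrt 2 := by
      have hsq2 : Real.sqrt 2 ^ 2 = 2 := Real.sq_sqrt (by norm_num)
      have hη0sq : (η0 ξ' ξ'' h) ^ 2 * (ξ'' - ξ') ^ 2 = 2 * ξ'' * h ^ 2 * (γ0 ξ' ξ'' h) ^ 2 := by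
        have hsq : (h * s * γ0 ξ' ξ'' h) ^ 2 = ((ξ'' - ξ') * η0 ξ' ξ'' h) ^ 2 := by
          rw [he1]
        linear_combination -hsq + h ^ 2 * (γ0 ξ' ξ'' h) ^ 2 * hs2
      have hle2 : (η0 ξ' ξ'' h) ^ 2 ≤ 2 := by
        have h1 : 2 * ξ'' * h ^ 2 * (γ0 ξ' ξ'' h) ^ 2 = 2 * (ξ'' * h ^ 2 - ξ' * (ξ'' - ξ')) := by
          linear_combination 2 * hγ0sq
        nlinarith [hη0sq, h1, mul_pos hsub hsub, hξ'',
          mul_le_mul_of_nonneg_left hup hξ''.le]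
      nlinarith [hsq2, hη0nn, hle2,
        Real.sqrt_pos.mpr (by norm_num : (0:ℝ) < 2)]
    have hsolγ0 : Sol ξ' ξ'' h (η0 ξ' ξ'' h) (γ0 ξ' ξ'' h) := by
      rw [sol_iff ξ' ξ'' h hξ' hξ'']
      refine ⟨hη0nn, hη0le, hγ0pos.le, hγ0lt, he1, ?_⟩
      -- e2
      apply mul_left_cancel₀ hsub.ne'
      linear_combination h*s*ξ'*(1-(γ0 ξ' ξ'' h)^2)*he1.symm
        - (ξ''+ξ')*(γ0 ξ' ξ'' h)*hγ0sq + h^2*(γ0 ξ' ξ'' h)*(1-(γ0 ξ' ξ'' h)^2)*ξ'*hs2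
    refine ⟨hsolγ0, ?_⟩
    intro η γ hsol
    by_cases hγ : γ = 0
    · subst hγ
      obtain ⟨hη1, hη2, hγ1, hγ2, e1, e2⟩ := (sol_iff ξ' ξ'' h hξ' hξ'' η 0).mp hsol
      left
      refine ⟨?_, rfl⟩
      have : (ξ'' - ξ') * η = 0 := by linarith [e1]
      rcases mul_eq_zero.mp this with h' | h'
      · linarith
      · exact h'
    · right
      obtain ⟨_, _, _, _, hγeq, hηeq⟩ := key ξ' ξ'' h hξ' hξ'' hh η γ hsol hγ
      exact ⟨hηeq, hγeq⟩
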